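/- Let D be an m×p real matrix with unit-norm columns, partitioned into groups of columns of size g. Then the sparse block coherence μ_B^{s} satisfies 0 ≤ μ_B^{s} ≤ √(s/g)·μ, where μ is the standard coherence of D. -/

import Mathlib

noncomputable def l2 {α : Type*} [Fintype α] (x : α → ℝ) : ℝ := Real.sqrt (∑ i, x i ^ 2)
noncomputable def l0 {α : Type*} (x : α → ℝ) : ℕ := Nat.card {i // x i ≠ 0}

/-- Largest `s`-sparse eigenvalue of `ZᵀZ`. -/
noncomputable def lamMaxS {α β : Type*} [Fintype α] [Fintype β]
    (s : ℕ) (Z : Matrix α β ℝ) : ℝ :=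
  sSup {x | ∃ v : β → ℝ, l2 v = 1 ∧ l0 v ≤ s ∧
    x = dotProduct v ((Z.transpose * Z).mulVec v)}

/-- The sparse matrix norm `ρ^s(Z) = √(λ_max^s(ZᵀZ))`. -/
noncomputable def rhoS {α β : Type*} [Fintype α] [Fintype β]
    (s : ℕ) (Z : Matrix α β ℝ) : ℝ :=
  Real.sqrt (lamMaxS s Z)

noncomputable def gram {m q g : ℕ} (D : Matrix (Fin m) (Fin q × Fin g) ℝ)
    (G F : Fin q) : Matrix (Fin g) (Fin g) ℝ :=
  fun a b => ∑ i, D i (G, a) * D i (F, b)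

/-- Standard coherence of `D`. -/
noncomputable def coh {m q g : ℕ} (D : Matrix (Fin m) (Fin q × Fin g) ℝ) : ℝ :=
  sSup {x | ∃ i j : Fin q × Fin g, i ≠ j ∧ x = |∑ r, D r i * D r j|}

/-- The sparse block coherence `μ_B^{s}`. -/
noncomputable def muBs {m q g : ℕ} (s : ℕ) (D : Matrix (Fin m) (Fin q × Fin g) ℝ) : ℝ :=
  sSup {x | ∃ G F : Fin q, G ≠ F ∧ x = (1 / (g : ℝ)) * rhoS s (gram D G F)}

/-!
For distinct groups `G ≠ F`, every entry of `D_Gᵀ D_F` is the inner product of two distinct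
columns of `D`, hence at most `μ` in absolute value. If `v` is a unit vector with at most `s`
nonzero entries, Cauchy–Schwarz on the support of `v` bounds every coordinate of `D_Gᵀ D_F v`
by `√s μ`, so `‖D_Gᵀ D_F v‖² ≤ g s μ²` and `ρ^s(D_Gᵀ D_F) ≤ √(g s) μ`. Dividing by `g` gives
the bound on each term of `μ_B^s`.
-/

open Finset Matrix

lemma l0_eq_card_filter {β : Type*} [Fintype β] (v : β → ℝ) :
    l0 v = #{b | v b ≠ 0} := by
  rw [l0, Nat.card_eq_fintype_card, Fintype.card_subtype]

lemma dotProduct_transpose_mul_mulVec {α β : Type*} [Fintype α] [Fintype β]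
    (Z : Matrix α β ℝ) (v : β → ℝ) :
    v ⬝ᵥ ((Zᵀ * Z) *ᵥ v) = ∑ a, (Z *ᵥ v) a ^ 2 := by
  rw [dotProduct_mulVec, ← vecMul_vecMul, vecMul_transpose, ← dotProduct_mulVec]
  simp [dotProduct, sq]

lemma sq_dotProduct_le_of_abs_le {β : Type*} [Fintype β] {w : β → ℝ} {c : ℝ}
    (hw : ∀ b, |w b| ≤ c) (v : β → ℝ) :
    (w ⬝ᵥ v) ^ 2 ≤ #{b | v b ≠ 0} * c ^ 2 * ∑ b, v b ^ 2 := by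
  set T : Finset β := {b | v b ≠ 0}
  have hsupp : w ⬝ᵥ v = ∑ b ∈ T, w b * v b :=
    (sum_subset (subset_univ T) fun b _ hb => by simp_all [T]).symm
  calc (w ⬝ᵥ v) ^ 2 ≤ (∑ b ∈ T, w b ^ 2) * ∑ b ∈ T, v b ^ 2 := by
        rw [hsupp]; exact sum_mul_sq_le_sq_mul_sq T w v
    _ ≤ (∑ _b ∈ T, c ^ 2) * ∑ b, v b ^ 2 := by
        refine mul_le_mul (sum_le_sum fun b _ => sq_le_sq.mpr ((hw b).trans (le_abs_self c)))
          (sum_le_sum_of_subset_of_nonneg (subset_univ T) fun _ _ _ => sq_nonneg _)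
          (sum_nonneg fun _ _ => sq_nonneg _) (sum_nonneg fun _ _ => sq_nonneg _)
    _ = #T * c ^ 2 * ∑ b, v b ^ 2 := by rw [sum_const, nsmul_eq_mul]

lemma lamMaxS_le_of_abs_le {α β : Type*} [Fintype α] [Fintype β] (s : ℕ) {Z : Matrix α β ℝ}
    {c : ℝ} (hZ : ∀ a b, |Z a b| ≤ c) :
    lamMaxS s Z ≤ Fintype.card α * s * c ^ 2 := by
  refine Real.sSup_le ?_ (by positivity)
  rintro x ⟨v, hv, hvs, rfl⟩
  have hv : ∑ b, v b ^ 2 = 1 := by rwa [l2, Real.sqrt_eq_one] at hv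
  have hvs : (#{b | v b ≠ 0} : ℝ) ≤ s := by exact_mod_cast l0_eq_card_filter v ▸ hvs
  rw [dotProduct_transpose_mul_mulVec]
  calc ∑ a, (Z *ᵥ v) a ^ 2 ≤ ∑ _a : α, (s : ℝ) * c ^ 2 := by
        refine sum_le_sum fun a _ => (sq_dotProduct_le_of_abs_le (hZ a) v).trans ?_
        rw [hv, mul_one]
        gcongr
    _ = Fintype.card α * s * c ^ 2 := by
        rw [sum_const, nsmul_eq_mul, card_univ, mul_assoc]

lemma rhoS_le_of_abs_le {α β : Type*} [Fintype α] [Fintype β] (s : ℕ) {Z : Matrix α β ℝ}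
    {c : ℝ} (hc : 0 ≤ c) (hZ : ∀ a b, |Z a b| ≤ c) :
    rhoS s Z ≤ √(Fintype.card α * s) * c := by
  rw [← Real.sqrt_sq hc, ← Real.sqrt_mul (by positivity)]
  exact Real.sqrt_le_sqrt (lamMaxS_le_of_abs_le s hZ)

lemma abs_inner_le_coh {m q g : ℕ} (D : Matrix (Fin m) (Fin q × Fin g) ℝ)
    {i j : Fin q × Fin g} (hij : i ≠ j) : |∑ r, D r i * D r j| ≤ coh D := by
  refine le_csSup ((Set.finite_range fun p : (Fin q × Fin g) × (Fin q × Fin g) =>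
    |∑ r, D r p.1 * D r p.2|).bddAbove.mono ?_) ⟨i, j, hij, rfl⟩
  rintro x ⟨i, j, -, rfl⟩
  exact ⟨(i, j), rfl⟩

lemma coh_nonneg {m q g : ℕ} (D : Matrix (Fin m) (Fin q × Fin g) ℝ) : 0 ≤ coh D :=
  Real.sSup_nonneg fun _ ⟨_, _, _, hx⟩ => hx ▸ abs_nonneg _

lemma abs_gram_le_coh {m q g : ℕ} (D : Matrix (Fin m) (Fin q × Fin g) ℝ) {G F : Fin q}
    (hGF : G ≠ F) (a b : Fin g) : |gram D G F a b| ≤ coh D :=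
  abs_inner_le_coh D fun h => hGF (Prod.ext_iff.mp h).1

lemma one_div_mul_sqrt_mul {x : ℝ} (hx : 0 ≤ x) (y : ℝ) : 1 / x * √(x * y) = √(y / x) := by
  rcases hx.eq_or_lt with rfl | hx
  · simp
  · rw [show x * y = x ^ 2 * (y / x) by field_simp, Real.sqrt_mul (sq_nonneg x),
      Real.sqrt_sq hx.le]
    field_simp

theorem muBs_le_general {m q g s : ℕ} (D : Matrix (Fin m) (Fin q × Fin g) ℝ) :
    0 ≤ muBs s D ∧ muBs s D ≤ Real.sqrt ((s : ℝ) / g) * coh D := by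
  have hterm : ∀ G F : Fin q, G ≠ F →
      1 / (g : ℝ) * rhoS s (gram D G F) ≤ √((s : ℝ) / g) * coh D := by
    intro G F hGF
    calc 1 / (g : ℝ) * rhoS s (gram D G F) ≤ 1 / (g : ℝ) * (√(g * s) * coh D) := by
          gcongr
          simpa using rhoS_le_of_abs_le s (coh_nonneg D) (abs_gram_le_coh D hGF)
      _ = √((s : ℝ) / g) * coh D := by
          rw [← mul_assoc, one_div_mul_sqrt_mul (Nat.cast_nonneg g)]
  constructor
  · exact Real.sSup_nonneg fun _ ⟨_, _, _, hx⟩ =>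
      hx ▸ mul_nonneg (by positivity) (Real.sqrt_nonneg _)
  · exact Real.sSup_le (fun _ ⟨G, F, hGF, hx⟩ => hx ▸ hterm G F hGF)
      (mul_nonneg (Real.sqrt_nonneg _) (coh_nonneg D))

/-- Proposition 1, second bound: `0 ≤ μ_B^{s} ≤ √(s/g)·μ`. -/
theorem muBs_le {m q g s : ℕ} (D : Matrix (Fin m) (Fin q × Fin g) ℝ)
    (hunit : ∀ j, ∑ i, D i j ^ 2 = 1) (hs1 : 1 ≤ s) (hsg : s ≤ g) :
    0 ≤ muBs s D ∧ muBs s D ≤ Real.sqrt ((s : ℝ) / g) * coh D :=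
  muBs_le_general D
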